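/- arXiv:2605.01279 — 3 statements merged into one kernel-verified Lean document; each statement's English description precedes it below -/
import Mathlib

section
/- A reduction removes two adjacent equal letters ('OO' or 'UU') from a word over {O,U}. If w' is obtained from a word w of even length by one reduction (deleting two adjacent equal letters), then Φ(w') = Φ(w), where Φ(w) = (1/2)(N^O_e + N^U_o − N^O_o − N^U_e) with positions counted from 1. -/
inductive Letter : Type
  | O : Letter
  | U : Letter
  deriving DecidableEq, BEq, Repr

open Letter

/-- number of O's in a word -/
def countO (w : List Letter) : ℕ := w.count O

/-- number of U's in a word -/
def countU (w : List Letter) : ℕ := w.count U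

/-- number of O's in odd 1-based positions (even 0-based index) -/
def NOo (w : List Letter) : ℕ := ((w.zipIdx.map Prod.swap).filter (fun p => p.1 % 2 == 0 && p.2 == O)).length

/-- number of O's in even 1-based positions -/
def NOe (w : List Letter) : ℕ := ((w.zipIdx.map Prod.swap).filter (fun p => p.1 % 2 == 1 && p.2 == O)).length

/-- number of U's in odd 1-based positions -/
def NUo (w : List Letter) : ℕ := ((w.zipIdx.map Prod.swap).filter (fun p => p.1 % 2 == 0 && p.2 == U)).length

/-- number of U's in even 1-based positions -/
def NUe (w : List Letter) : ℕ := ((w.zipIdx.map Prod.swap).filter (fun p => p.1 % 2 == 1 && p.2 == U)).length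

/-- twice the OU signed quantity: N^O_e + N^U_o − N^O_o − N^U_e -/
def twoPhi (w : List Letter) : ℤ := (NOe w : ℤ) + NUo w - NOo w - NUe w

/-- the (signed) OU number Φ of a word of even length -/
def Phi (w : List Letter) : ℤ := twoPhi w / 2

/-- cyclic access to the letters of a word -/
def cget (w : List Letter) (i : ℕ) : Letter := w.getD (i % w.length) O

/-- a cyclic occurrence of the factor `OU` at position `i` -/
def OUat (w : List Letter) (i : ℕ) : Prop := cget w i = O ∧ cget w (i + 1) = U

/-- a cyclic occurrence of the factor `UO` at position `i` -/
def UOat (w : List Letter) (i : ℕ) : Prop := cget w i = U ∧ cget w (i + 1) = O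

instance (w : List Letter) (i : ℕ) : Decidable (OUat w i) := by unfold OUat; infer_instance
instance (w : List Letter) (i : ℕ) : Decidable (UOat w i) := by unfold UOat; infer_instance

/-- the cyclic factors at positions `i` and `j` (each occupying `{i, i+1 mod n}`) are disjoint -/
def PairDisjoint (n i j : ℕ) : Prop :=
  i ≠ j ∧ i ≠ (j + 1) % n ∧ (i + 1) % n ≠ j ∧ (i + 1) % n ≠ (j + 1) % n

/-- a word is alternating in the cyclic sense -/
def CyclicAlternating (w : List Letter) : Prop :=
  w.Chain' (· ≠ ·) ∧ ∀ a ∈ w.head?, ∀ b ∈ w.getLast?, a ≠ b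

/-- one reduction: delete two adjacent equal letters -/
def Reduces (w w' : List Letter) : Prop :=
  ∃ a b x, w = a ++ x :: x :: b ∧ w' = a ++ b

/-- `ReducesN k w w'` : `w'` is obtained from `w` by exactly `k` reductions -/
inductive ReducesN : ℕ → List Letter → List Letter → Prop
  | refl (w : List Letter) : ReducesN 0 w w
  | step {k : ℕ} {w w' w'' : List Letter} :
      Reduces w w' → ReducesN k w' w'' → ReducesN (k + 1) w w''

/-!
Prepending a letter shifts every later letter by one position, swapping odd and even positions,
so `twoPhi (x :: t) = x.sign - twoPhi t` with `O.sign = -1`, `U.sign = 1`. Consequently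
`twoPhi (a ++ b) = twoPhi a ± twoPhi b` and `twoPhi (x :: x :: b) = twoPhi b`: deleting a factor
`xx` leaves `twoPhi`, and hence `Phi`, unchanged.
-/

instance : LawfulBEq Letter where
  eq_of_beq {a b} h := by cases a <;> cases b <;> first | rfl | cases h
  rfl {a} := by cases a <;> rfl

lemma length_filter_zipIdx_cons (p : ℕ × Letter → Bool) (x : Letter) (t : List Letter) :
    (((x :: t).zipIdx.map Prod.swap).filter p).length
      = (if p (0, x) then 1 else 0)
        + ((t.zipIdx.map Prod.swap).filter (fun q => p (q.1 + 1, q.2))).length := by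
  simp only [← List.countP_eq_length_filter, List.zipIdx_cons, List.zipIdx_succ, List.map_cons,
    List.countP_cons, List.map_map, List.countP_map]
  simp [Function.comp_def, add_comm]

lemma succ_mod_two_beq_zero (n : ℕ) : ((n + 1) % 2 == 0) = (n % 2 == 1) := by
  simp [Nat.succ_mod_two_eq_zero_iff]

lemma succ_mod_two_beq_one (n : ℕ) : ((n + 1) % 2 == 1) = (n % 2 == 0) := by
  simp [Nat.succ_mod_two_eq_one_iff]

lemma NOo_cons (x : Letter) (t : List Letter) :
    NOo (x :: t) = (if x = O then 1 else 0) + NOe t := by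
  rw [NOo, length_filter_zipIdx_cons]
  simp [NOe, succ_mod_two_beq_zero]

lemma NOe_cons (x : Letter) (t : List Letter) : NOe (x :: t) = NOo t := by
  rw [NOe, length_filter_zipIdx_cons]
  simp [NOo, succ_mod_two_beq_one]

lemma NUo_cons (x : Letter) (t : List Letter) :
    NUo (x :: t) = (if x = U then 1 else 0) + NUe t := by
  rw [NUo, length_filter_zipIdx_cons]
  simp [NUe, succ_mod_two_beq_zero]

lemma NUe_cons (x : Letter) (t : List Letter) : NUe (x :: t) = NUo t := by
  rw [NUe, length_filter_zipIdx_cons]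
  simp [NUo, succ_mod_two_beq_one]

def Letter.sign : Letter → ℤ
  | O => -1
  | U => 1

lemma twoPhi_nil : twoPhi [] = 0 := rfl

lemma twoPhi_cons (x : Letter) (t : List Letter) : twoPhi (x :: t) = x.sign - twoPhi t := by
  cases x <;> simp [twoPhi, NOo_cons, NOe_cons, NUo_cons, NUe_cons, Letter.sign] <;> ring

lemma twoPhi_append (a b : List Letter) :
    twoPhi (a ++ b) = twoPhi a + (-1) ^ a.length * twoPhi b := by
  induction a with
  | nil => simp [twoPhi_nil]
  | cons x a ih =>
    rw [List.cons_append, twoPhi_cons, twoPhi_cons, ih, List.length_cons, pow_succ]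
    ring

lemma twoPhi_cons_cons (x : Letter) (t : List Letter) : twoPhi (x :: x :: t) = twoPhi t := by
  rw [twoPhi_cons, twoPhi_cons, sub_sub_cancel]

lemma twoPhi_eq_of_reduces {w w' : List Letter} (hr : Reduces w w') : twoPhi w' = twoPhi w := by
  obtain ⟨a, b, x, rfl, rfl⟩ := hr
  rw [twoPhi_append, twoPhi_append, twoPhi_cons_cons]

theorem stmt5_general (w w' : List Letter) (hr : Reduces w w') :
    Phi w' = Phi w := by
  rw [Phi, Phi, twoPhi_eq_of_reduces hr]

theorem stmt5 (w w' : List Letter) (h : Even w.length) (hr : Reduces w w') :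
    Phi w' = Phi w :=
  stmt5_general w w' hr
end

section
/- Let w be a word over {O,U} of even length containing at least one O and at least one U, with Φ(w) ≥ 0 (choose orientation so the OU number is nonnegative). Then, viewing w cyclically, w contains at least Φ(w) pairwise disjoint occurrences of the factor 'OU' (an O immediately followed, cyclically, by a U). -/
open Letter

/-! Write `σᵢ = ±1` for the letter at position `i` (`U ↦ 1`, `O ↦ -1`), so that
`2Φ(w) = ∑ (-1)ⁱ σᵢ`. As `|w|` is even, `(-1)ⁱ` alternates also across the wrap-around, whence
`4Φ(w) = ∑ (-1)ⁱ (σᵢ - σᵢ₊₁)`. Adding the telescoping sum `∑ (σᵢ₊₁ - σᵢ) = 0`, each summand is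
at most `4` and positive only at an occurrence of `OU`; so `Φ(w)` is at most the number of
occurrences of `OU`, and distinct occurrences of `OU` never overlap. -/

open Finset

namespace Letter

def sign_s7 : Letter → ℤ
  | O => -1
  | U => 1

theorem mul_sign_sub_add_sign_sub_le (ε : ℤ) (hε : ε = 1 ∨ ε = -1) (a b : Letter) :
    ε * (a.sign_s7 - b.sign_s7) + (b.sign_s7 - a.sign_s7) ≤ if a = O ∧ b = U then 4 else 0 := by
  rcases hε with rfl | rfl <;> cases a <;> cases b <;> decide

end Letter

theorem List.length_filter_map_swap_zipIdx {α : Type*} (p : ℕ × α → Bool) (d : α)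
    (l : List α) (k : ℕ) :
    (((l.zipIdx k).map Prod.swap).filter p).length
      = ∑ i ∈ Finset.range l.length, if p (k + i, l.getD i d) then 1 else 0 := by
  induction l generalizing k with
  | nil => simp
  | cons a t ih =>
    rw [List.length_cons, Finset.sum_range_succ', List.zipIdx_cons, List.map_cons,
      List.filter_cons]
    simp only [Prod.swap_prod_mk, List.getD_cons_succ, List.getD_cons_zero, add_zero]
    split <;> simp [ih, add_right_comm k 1, add_assoc]

theorem cget_length (w : List Letter) : cget w w.length = cget w 0 := by
  simp [cget]

theorem twoPhi_eq_sum_neg_one_pow_mul_sign (w : List Letter) :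
    twoPhi w = ∑ i ∈ range w.length, (-1) ^ i * (cget w i).sign_s7 := by
  simp only [twoPhi, NOe, NUo, NOo, NUe, List.length_filter_map_swap_zipIdx _ O, zero_add]
  push_cast
  simp only [← sum_add_distrib, ← sum_sub_distrib]
  refine sum_congr rfl fun i hi => ?_
  rw [cget, Nat.mod_eq_of_lt (mem_range.mp hi), neg_one_pow_eq_pow_mod_two]
  rcases Nat.mod_two_eq_zero_or_one i with h | h <;> cases w.getD i O <;>
    simp [h, Letter.sign_s7] <;> decide

theorem pairDisjoint_of_OUat {w : List Letter} {i j : ℕ} (hi : i < w.length)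
    (hj : j < w.length) (hij : i ≠ j) (hOUi : OUat w i) (hOUj : OUat w j) :
    PairDisjoint w.length i j := by
  have hsucc (k : ℕ) : cget w ((k + 1) % w.length) = cget w (k + 1) := by
    simp [cget]
  refine ⟨hij, fun h => ?_, fun h => ?_, fun h => hij ?_⟩
  · have hO := hOUi.1; rw [h, hsucc, hOUj.2] at hO; cases hO
  · have hO := hOUj.1; rw [← h, hsucc, hOUi.2] at hO; cases hO
  · exact (Nat.ModEq.add_right_cancel' 1 h).eq_of_lt_of_lt hi hj

theorem twoPhi_le_two_mul_card_OUat {w : List Letter} (h : Even w.length) :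
    twoPhi w ≤ 2 * #{i ∈ range w.length | OUat w i} := by
  set n := w.length
  set s : ℕ → ℤ := fun i => (cget w i).sign_s7
  have hsign : ∑ i ∈ range n, (s (i + 1) - s i) = 0 := by
    rw [sum_range_sub]; simp [s, n, cget_length]
  have halt : ∑ i ∈ range n, (-1) ^ i * (s i - s (i + 1)) = 2 * twoPhi w := by
    have hg : ∑ i ∈ range n, ((-1) ^ (i + 1) * s (i + 1) - (-1) ^ i * s i) = 0 := by
      rw [sum_range_sub (fun i => (-1) ^ i * s i)]; simp [s, n, cget_length, h.neg_one_pow]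
    rw [twoPhi_eq_sum_neg_one_pow_mul_sign, mul_sum, ← sub_eq_zero, ← sum_sub_distrib, ← hg]
    exact sum_congr rfl fun i _ => by ring
  have hlocal : ∀ i ∈ range n, (-1) ^ i * (s i - s (i + 1)) + (s (i + 1) - s i)
      ≤ 4 * if OUat w i then 1 else 0 := fun i _ => by
    rw [mul_ite, mul_one, mul_zero]
    exact Letter.mul_sign_sub_add_sign_sub_le _ (neg_one_pow_eq_or ℤ i) _ _
  have hsum := sum_le_sum hlocal
  rw [sum_add_distrib, halt, hsign, ← mul_sum, sum_boole] at hsum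
  linarith

theorem stmt7_general (w : List Letter) (h : Even w.length) :
    ∃ S : Finset ℕ,
      (∀ i ∈ S, i < w.length ∧ OUat w i) ∧
      (∀ i ∈ S, ∀ j ∈ S, i ≠ j → PairDisjoint w.length i j) ∧
      Phi w ≤ (S.card : ℤ) := by
  refine ⟨{i ∈ range w.length | OUat w i}, fun i hi => by simpa using hi,
    fun i hi j hj hij => ?_, ?_⟩
  · simp only [mem_filter, mem_range] at hi hj
    exact pairDisjoint_of_OUat hi.1 hj.1 hij hi.2 hj.2
  · have hbound := twoPhi_le_two_mul_card_OUat h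
    unfold Phi
    omega

theorem stmt7 (w : List Letter) (h : Even w.length)
    (hO : 1 ≤ countO w) (hU : 1 ≤ countU w) (hP : 0 ≤ Phi w) :
    ∃ S : Finset ℕ,
      (∀ i ∈ S, i < w.length ∧ OUat w i) ∧
      (∀ i ∈ S, ∀ j ∈ S, i ≠ j → PairDisjoint w.length i j) ∧
      Phi w ≤ (S.card : ℤ) :=
  stmt7_general w h
end

section
/- Let w be a cyclic word over {O,U} of even length with at least two O's and at least two U's. Then w contains two disjoint cyclic factors that are either 'OU' and 'UO', or 'OU' and 'OU'. -/
open Letter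

/-! Both letters occur, so the cyclic word has an `OU` factor at some position `p`, and read from
`p + 1` it runs from a `U` to the `O` at `p + n`. If the next letter is `O`, a second `U` lies
strictly inside that stretch and the run of `O`s before it ends in an `OU` factor; if it is `U`,
a second `O` does, and the run of `U`s before it ends in a `UO` factor. Either factor sits at cyclic
distance between `2` and `n - 2` from `p`, hence is disjoint from the first one. -/

instance inst_s8 : LawfulBEq Letter where
  rfl {a} := by cases a <;> rfl
  eq_of_beq {a b} h := by cases a <;> cases b <;> first | rfl | cases h

theorem Letter.eq_U_of_ne_O {l : Letter} (h : l ≠ O) : l = U := by cases l <;> simp_all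

theorem Letter.eq_O_of_ne_U {l : Letter} (h : l ≠ U) : l = O := by cases l <;> simp_all

theorem exists_step_of_ne {α : Type*} (f : ℕ → α) {a : α} {s k : ℕ} (hs : f s = a)
    (hk : f (s + k) ≠ a) : ∃ j < k, f (s + j) = a ∧ f (s + j + 1) ≠ a := by
  induction k with
  | zero => exact absurd hs hk
  | succ k ih =>
    by_cases hfk : f (s + k) = a
    · exact ⟨k, k.lt_succ_self, hfk, hk⟩
    · obtain ⟨j, hj, hfj⟩ := ih hfk
      exact ⟨j, hj.trans k.lt_succ_self, hfj⟩

theorem exists_two_indices_of_two_le_count {l : List Letter} {x : Letter} (h : 2 ≤ l.count x) :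
    ∃ a b, a < l.length ∧ b < l.length ∧ a ≠ b ∧ l[a]? = some x ∧ l[b]? = some x := by
  rw [lawful_beq_subsingleton instBEqLetter instBEqOfDecidableEq,
    ← List.duplicate_iff_two_le_count, List.duplicate_iff_exists_distinct_get] at h
  obtain ⟨a, b, hab, ha, hb⟩ := h
  exact ⟨a, b, a.2, b.2, Fin.val_ne_of_ne hab.ne, by simp [ha], by simp [hb]⟩

theorem exists_add_mod_eq {n : ℕ} (s : ℕ) {a : ℕ} (ha : a < n) : ∃ t < n, (s + t) % n = a := by
  have hs : s % n ≤ n := (Nat.mod_lt _ (by omega)).le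
  refine ⟨(a + (n - s % n)) % n, Nat.mod_lt _ (by omega), ?_⟩
  have hsplit : s + (a + (n - s % n)) = a + n * (s / n + 1) := by
    have h := Nat.mod_add_div s n
    zify [hs] at h ⊢
    linarith
  rw [Nat.add_mod_mod, hsplit, Nat.add_mul_mod_self_left, Nat.mod_eq_of_lt ha]

theorem Nat.mod_eq_or_sub_of_lt_add {x n : ℕ} (h : x < n + n) :
    x < n ∧ x % n = x ∨ n ≤ x ∧ x % n = x - n := by
  rcases Nat.lt_or_ge x n with hx | hx
  · exact Or.inl ⟨hx, Nat.mod_eq_of_lt hx⟩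
  · exact Or.inr ⟨hx, by rw [Nat.mod_eq_sub_mod hx, Nat.mod_eq_of_lt (by omega)]⟩

theorem pairDisjoint_mod (n p : ℕ) {k : ℕ} (hk : 2 ≤ k) (hkn : k + 2 ≤ n) :
    PairDisjoint n (p % n) ((p + k) % n) := by
  rw [← Nat.mod_add_mod p n k]
  have hi : p % n < n := Nat.mod_lt _ (by omega)
  generalize p % n = i at hi
  unfold PairDisjoint
  rw [Nat.mod_add_mod]
  rcases Nat.mod_eq_or_sub_of_lt_add (show i + 1 < n + n by omega) with h₁ | h₁ <;>
  rcases Nat.mod_eq_or_sub_of_lt_add (show i + k < n + n by omega) with h₂ | h₂ <;>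
  rcases Nat.mod_eq_or_sub_of_lt_add (show i + k + 1 < n + n by omega) with h₃ | h₃ <;>
  omega

section Cyclic

variable {w : List Letter}

theorem cget_congr {i j : ℕ} (h : i % w.length = j % w.length) : cget w i = cget w j := by
  rw [cget, h, cget]

theorem cget_mod (i : ℕ) : cget w (i % w.length) = cget w i :=
  cget_congr (Nat.mod_mod _ _)

theorem cget_add_length (i : ℕ) : cget w (i + w.length) = cget w i :=
  cget_congr (Nat.add_mod_right _ _)

theorem cget_eq_of_getElem? {i c : ℕ} {x : Letter} (hc : i % w.length = c) (hx : w[c]? = some x) :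
    cget w i = x := by
  rw [cget, hc, List.getD_eq_getElem?_getD, hx, Option.getD_some]

theorem OUat_mod_iff {i : ℕ} : OUat w (i % w.length) ↔ OUat w i := by
  rw [OUat, OUat, cget_mod, cget_congr (Nat.mod_add_mod i _ 1)]

theorem UOat_mod_iff {i : ℕ} : UOat w (i % w.length) ↔ UOat w i := by
  rw [UOat, UOat, cget_mod, cget_congr (Nat.mod_add_mod i _ 1)]

theorem exists_OUat_of_cget {s k : ℕ} (hs : cget w s = O) (hk : cget w (s + k) = U) :
    ∃ j < k, OUat w (s + j) := by
  obtain ⟨j, hj, hO, hU⟩ := exists_step_of_ne (cget w) (k := k) hs (by simp [hk])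
  exact ⟨j, hj, hO, Letter.eq_U_of_ne_O hU⟩

theorem exists_UOat_of_cget {s k : ℕ} (hs : cget w s = U) (hk : cget w (s + k) = O) :
    ∃ j < k, UOat w (s + j) := by
  obtain ⟨j, hj, hU, hO⟩ := exists_step_of_ne (cget w) (k := k) hs (by simp [hk])
  exact ⟨j, hj, hU, Letter.eq_O_of_ne_U hO⟩

theorem exists_offset_ne {x : Letter} (h : 2 ≤ w.count x) (s t₀ : ℕ) :
    ∃ t < w.length, t ≠ t₀ ∧ cget w (s + t) = x := by
  obtain ⟨a, b, ha, hb, hab, hax, hbx⟩ := exists_two_indices_of_two_le_count h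
  obtain ⟨ta, hta, hsa⟩ := exists_add_mod_eq s ha
  obtain ⟨tb, htb, hsb⟩ := exists_add_mod_eq s hb
  by_cases h₀ : ta = t₀
  · exact ⟨tb, htb, fun hb₀ => hab (by rw [← hsa, ← hsb, h₀, hb₀]), cget_eq_of_getElem? hsb hbx⟩
  · exact ⟨ta, hta, h₀, cget_eq_of_getElem? hsa hax⟩

theorem exists_OUat (hO : O ∈ w) (hU : U ∈ w) : ∃ p, OUat w p := by
  obtain ⟨a, ha⟩ := List.getElem?_of_mem hO
  obtain ⟨b, hb⟩ := List.getElem?_of_mem hU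
  obtain ⟨k, -, hk⟩ := exists_add_mod_eq a (List.getElem?_eq_some_iff.1 hb).1
  have haO : cget w a = O :=
    cget_eq_of_getElem? (Nat.mod_eq_of_lt (List.getElem?_eq_some_iff.1 ha).1) ha
  obtain ⟨j, -, hj⟩ := exists_OUat_of_cget haO (cget_eq_of_getElem? hk hb)
  exact ⟨_, hj⟩

theorem exists_factor_at_distance (hO : 2 ≤ w.count O) (hU : 2 ≤ w.count U) {p : ℕ}
    (hp : OUat w p) :
    ∃ k, 2 ≤ k ∧ k + 2 ≤ w.length ∧ (UOat w (p + k) ∨ OUat w (p + k)) := by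
  have hn : 2 ≤ w.length := hO.trans List.count_le_length
  have hwrap : cget w (p + 1 + (w.length - 1)) = O := by
    rw [show p + 1 + (w.length - 1) = p + w.length by omega, cget_add_length, hp.1]
  cases h₂ : cget w (p + 2) with
  | O =>
    obtain ⟨t, ht, ht₀, htU⟩ := exists_offset_ne hU (p + 1) 0
    have ht₁ : t ≠ 1 := by rintro rfl; simp [h₂] at htU
    have htn : t ≠ w.length - 1 := by rintro rfl; simp [hwrap] at htU
    obtain ⟨j, hj, hOU⟩ := exists_OUat_of_cget (k := t - 1) h₂
      (by rwa [show p + 2 + (t - 1) = p + 1 + t by omega])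
    exact ⟨j + 2, by omega, by omega, Or.inr (by rwa [← Nat.add_assoc, Nat.add_right_comm])⟩
  | U =>
    obtain ⟨t, ht, htn, htO⟩ := exists_offset_ne hO (p + 1) (w.length - 1)
    have ht₀ : t ≠ 0 := by rintro rfl; simp [hp.2] at htO
    have ht₁ : t ≠ 1 := by rintro rfl; simp [h₂] at htO
    obtain ⟨j, hj, hUO⟩ := exists_UOat_of_cget (k := t - 1) h₂
      (by rwa [show p + 2 + (t - 1) = p + 1 + t by omega])
    exact ⟨j + 2, by omega, by omega, Or.inl (by rwa [← Nat.add_assoc, Nat.add_right_comm])⟩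

end Cyclic

theorem stmt8_general (w : List Letter)
    (hO : 2 ≤ countO w) (hU : 2 ≤ countU w) :
    ∃ i j, i < w.length ∧ j < w.length ∧ PairDisjoint w.length i j ∧
      OUat w i ∧ (UOat w j ∨ OUat w j) := by
  have hn : 0 < w.length := by
    have := hO.trans List.count_le_length; omega
  obtain ⟨p, hp⟩ := exists_OUat (List.count_pos_iff.1 (two_pos.trans_le hO))
    (List.count_pos_iff.1 (two_pos.trans_le hU))
  obtain ⟨k, hk, hkn, hfactor⟩ := exists_factor_at_distance hO hU hp
  exact ⟨p % w.length, (p + k) % w.length, Nat.mod_lt _ hn, Nat.mod_lt _ hn,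
    pairDisjoint_mod _ p hk hkn, OUat_mod_iff.2 hp, hfactor.imp UOat_mod_iff.2 OUat_mod_iff.2⟩

theorem stmt8 (w : List Letter) (h : Even w.length)
    (hO : 2 ≤ countO w) (hU : 2 ≤ countU w) :
    ∃ i j, i < w.length ∧ j < w.length ∧ PairDisjoint w.length i j ∧
      OUat w i ∧ (UOat w j ∨ OUat w j) :=
  stmt8_general w hO hU
end
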